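/- Let Γ be a finite Eulerian poset of positive rank with natural rank function ρ_Γ, and let Γ′ be a finite lower Eulerian poset with natural rank function ρ_{Γ′}. Let Γ ∗ Γ′ be the star product: the poset on the disjoint union of ∂Γ = Γ ∖ {1̂_Γ} and Γ′ ∖ {0̂_{Γ′}}, where z ≤ z' iff both lie in ∂Γ with z ≤ z' in Γ, or both lie in Γ′ ∖ {0̂_{Γ′}} with z ≤ z' in Γ′, or z ∈ ∂Γ and z' ∈ Γ′ ∖ {0̂_{Γ′}}. Then: (1) Γ ∗ Γ′ is lower Eulerian with rank function equal to ρ_Γ on ∂Γ and equal to ρ_{Γ′} + rank(Γ) − 1 on Γ′ ∖ {0̂_{Γ′}}; (2) if q′ is a join-admissible element of Γ′ with q′ ≠ 0̂_{Γ′}, then q′, viewed as an element of Γ ∗ Γ′, is join-admissible. -/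

import Mathlib

namespace SFSPaper

variable {α β : Type*}

/-- `ρ` is a rank function: it increases by exactly one along covering relations. -/
def IsRankFunction [Preorder α] (ρ : α → ℤ) : Prop :=
  ∀ ⦃z z' : α⦄, z ⋖ z' → ρ z' = ρ z + 1

/-- `σ` is rank-increasing with respect to the rank functions `ρX` and `ρY`. -/
def RankIncreasing [Preorder α] [Preorder β] (ρX : α → ℤ) (ρY : β → ℤ) (σ : α → β) : Prop :=
  ∀ x : α, ρX x ≤ ρY (σ x)

/-- `σ` is strongly surjective. -/
def StronglySurjective [Preorder α] [Preorder β] (ρX : α → ℤ) (ρY : β → ℤ) (σ : α → β) : Prop :=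
  Function.Surjective σ ∧
    ∀ (x : α) (y : β), σ x ≤ y → ∃ x' : α, x ≤ x' ∧ ρX x' = ρY y ∧ σ x' = y

/-- The alternating sum `∑_{z ≤ w ≤ z'} (-1)^(ρ w)`. -/
noncomputable def intervalEulerSum [Preorder α] (ρ : α → ℤ) (z z' : α) : ℚ :=
  ∑ᶠ (w : α) (_ : z ≤ w ∧ w ≤ z'), (-1 : ℚ) ^ ρ w

/-- A poset is lower Eulerian with respect to `ρ` if `ρ` is a rank function, there is a
unique minimal (i.e. least) element, and every nontrivial interval has as many elements of even
rank as of odd rank. -/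
def LowerEulerian [PartialOrder α] (ρ : α → ℤ) : Prop :=
  IsRankFunction ρ ∧ (∃ b : α, ∀ z : α, b ≤ z) ∧
    ∀ z z' : α, z < z' → intervalEulerSum ρ z z' = 0

/-- Eulerian: lower Eulerian with a unique maximal element. -/
def Eulerian [PartialOrder α] (ρ : α → ℤ) : Prop :=
  LowerEulerian ρ ∧ ∃ t : α, ∀ z : α, z ≤ t

/-- Strong formal subdivision. -/
def StrongFormalSubdivision [PartialOrder α] [PartialOrder β]
    (ρX : α → ℤ) (ρY : β → ℤ) (σ : α → β) : Prop :=
  Monotone σ ∧ RankIncreasing ρX ρY σ ∧ StronglySurjective ρX ρY σ ∧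
    ∀ (x : α) (y : β), σ x ≤ y →
      (∑ᶠ (x' : α) (_ : x ≤ x' ∧ σ x' = y), (-1 : ℚ) ^ (ρY y - ρX x')) = 1

/-- `q` is join-admissible: every `z` has a join with `q`. -/
def JoinAdmissible [Preorder α] (q : α) : Prop :=
  ∀ z : α, ∃ j : α, IsLeast {w : α | z ≤ w ∧ q ≤ w} j

/-- The rank of a poset: the maximal length of a chain `z_0 < z_1 < ⋯ < z_s`. -/
noncomputable def posetRank (α : Type*) [Preorder α] : ℕ :=
  sSup {n : ℕ | ∃ c : Fin (n + 1) → α, StrictMono c}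

/-- A poset is graded if all of its maximal chains have the same length (cardinality). -/
def GradedPoset (α : Type*) [Preorder α] : Prop :=
  ∀ s t : Set α, IsMaxChain (· ≤ ·) s → IsMaxChain (· ≤ ·) t → s.ncard = t.ncard


/-- The order relation of the star product: every element of `A` lies below every element
of `B`. -/
def starLE {A B : Type*} [LE A] [LE B] : A ⊕ B → A ⊕ B → Prop
  | Sum.inl x, Sum.inl x' => x ≤ x'
  | Sum.inl _, Sum.inr _ => True
  | Sum.inr _, Sum.inl _ => False
  | Sum.inr y, Sum.inr y' => y ≤ y'

/-- The star product partial order on `A ⊕ B`. -/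
def starPartialOrder (A B : Type*) [PartialOrder A] [PartialOrder B] :
    PartialOrder (A ⊕ B) where
  le := starLE
  lt a b := starLE a b ∧ ¬ starLE b a
  lt_iff_le_not_ge _ _ := Iff.rfl
  le_refl := by rintro (x | y) <;> simp [starLE]
  le_trans := by
    rintro (x | y) (x' | y') (x'' | y'') h1 h2 <;> simp only [starLE] at * <;>
      exact h1.trans h2
  le_antisymm := by
    rintro (x | y) (x' | y') h1 h2 <;> simp only [starLE] at *
    · exact congrArg Sum.inl (le_antisymm h1 h2)
    · exact congrArg Sum.inr (le_antisymm h1 h2)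

/-!
An interval `[z, z']` of `∂Γ ∗ (Γ' ∖ {0̂})` is an interval of `Γ`, or an interval of `Γ'` with
all ranks shifted by `rank Γ - 1`, unless `z ∈ ∂Γ` and `z' ∈ Γ' ∖ {0̂}`. In that case it is
`[z, 1̂) ⊔ (0̂, z']`, and since `[z, 1̂]` and `[0̂, z']` are Eulerian the two pieces contribute
`-(-1)^(rank Γ)` and `-(-1)^(rank Γ - 1)`, which cancel. The covers that cross from `∂Γ` to
`Γ' ∖ {0̂}` go from a coatom of `Γ` (rank `rank Γ - 1`) to an atom of `Γ'` (shifted rank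
`rank Γ`); here `rank Γ = ρ 1̂`, because a rank function on a finite bounded poset is strictly
monotone and is realised along a saturated chain. Joins with `q'` are taken in `Γ'`.
-/

theorem IsRankFunction.add_const [Preorder α] {ρ : α → ℤ} (hρ : IsRankFunction ρ) (k : ℤ) :
    IsRankFunction fun z => ρ z + k :=
  fun _ _ h => by simp only [hρ h]; ring

section RankFunction

variable [PartialOrder α] [Finite α] {ρ : α → ℤ}

theorem IsRankFunction.exists_chain (hρ : IsRankFunction ρ) {x y : α} (hxy : x ≤ y) :
    ∃ (n : ℕ) (c : Fin (n + 1) → α),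
      StrictMono c ∧ c 0 = x ∧ c (Fin.last n) = y ∧ ρ y = ρ x + n := by
  obtain ⟨a, rfl, n, rfl, ha⟩ := exists_covBy_seq_of_wellFoundedLT_wellFoundedGT_of_le hxy
  have hρa : ∀ i ≤ n, ρ (a i) = ρ (a 0) + i := by
    intro i hi
    induction i with
    | zero => simp
    | succ i ih => rw [hρ (ha i (by omega)), ih (by omega)]; push_cast; ring
  exact ⟨n, fun i => a i, Fin.strictMono_iff_lt_succ.mpr fun i => (ha i i.isLt).lt,
    rfl, rfl, hρa n le_rfl⟩

theorem IsRankFunction.strictMono (hρ : IsRankFunction ρ) : StrictMono ρ := by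
  intro x y hxy
  obtain ⟨n, c, -, hc0, hcn, hρy⟩ := hρ.exists_chain hxy.le
  have : n ≠ 0 := by rintro rfl; exact hxy.ne (hc0.symm.trans hcn)
  omega

theorem IsRankFunction.posetRank_eq (hρ : IsRankFunction ρ) {b t : α} (hb : ∀ z, b ≤ z)
    (ht : ∀ z, z ≤ t) : (posetRank α : ℤ) = ρ t - ρ b := by
  obtain ⟨n, c, hc, -, -, hρt⟩ := hρ.exists_chain (hb t)
  suffices IsGreatest {m | ∃ c : Fin (m + 1) → α, StrictMono c} n by
    rw [posetRank, this.csSup_eq]; omega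
  refine ⟨⟨c, hc⟩, ?_⟩
  rintro m ⟨d, hd⟩
  have hlen : ρ (d 0) + m ≤ ρ (d (Fin.last m)) :=
    ((LTSeries.mk m d hd).map ρ hρ.strictMono).head_add_length_le_int
  have h0 := hρ.strictMono.monotone (hb (d 0))
  have h1 := hρ.strictMono.monotone (ht (d (Fin.last m)))
  omega

end RankFunction

section EulerSum

theorem intervalEulerSum_eq_finsum_mem_Icc [Preorder α] (ρ : α → ℤ) (z z' : α) :
    intervalEulerSum ρ z z' = ∑ᶠ w ∈ Set.Icc z z', (-1 : ℚ) ^ ρ w :=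
  rfl

theorem finsum_mem_neg_one_zpow_add (s : Set α) (ρ : α → ℤ) (k : ℤ) :
    ∑ᶠ w ∈ s, (-1 : ℚ) ^ (ρ w + k) = (-1) ^ k * ∑ᶠ w ∈ s, (-1 : ℚ) ^ ρ w := by
  rw [mul_finsum_mem]
  exact finsum_mem_congr rfl fun w _ => by rw [zpow_add₀ (by norm_num), mul_comm]

theorem intervalEulerSum_add_const [Preorder α] (ρ : α → ℤ) (k : ℤ) (z z' : α) :
    intervalEulerSum (fun w => ρ w + k) z z' = (-1) ^ k * intervalEulerSum ρ z z' :=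
  finsum_mem_neg_one_zpow_add _ ρ k

variable [PartialOrder α] [Finite α] {ρ : α → ℤ} {z z' : α}

theorem finsum_mem_Ico_eq_neg (h : z ≤ z') (hE : intervalEulerSum ρ z z' = 0) :
    ∑ᶠ w ∈ Set.Ico z z', (-1 : ℚ) ^ ρ w = -(-1) ^ ρ z' := by
  rw [intervalEulerSum_eq_finsum_mem_Icc, ← Set.Ico_insert_right h,
    finsum_mem_insert _ Set.right_notMem_Ico (Set.toFinite _)] at hE
  linear_combination hE

theorem finsum_mem_Ioc_eq_neg (h : z ≤ z') (hE : intervalEulerSum ρ z z' = 0) :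
    ∑ᶠ w ∈ Set.Ioc z z', (-1 : ℚ) ^ ρ w = -(-1) ^ ρ z := by
  rw [intervalEulerSum_eq_finsum_mem_Icc, ← Set.Ioc_insert_left h,
    finsum_mem_insert _ Set.left_notMem_Ioc (Set.toFinite _)] at hE
  linear_combination hE

end EulerSum

section Subtype

theorem finsum_mem_preimage_subtype_val {p : α → Prop} {M : Type*} [AddCommMonoid M]
    (s : Set α) (f : α → M) :
    ∑ᶠ x ∈ Subtype.val ⁻¹' s, f (x : {x // p x}) = ∑ᶠ w ∈ s ∩ {w | p w}, f w := by
  rw [← Subtype.range_coe_subtype, ← Set.image_preimage_eq_inter_range,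
    finsum_mem_image Subtype.val_injective.injOn]

variable [PartialOrder α] {p : α → Prop}

theorem IsRankFunction.subtype {ρ : α → ℤ} (hρ : IsRankFunction ρ)
    (hp : Set.OrdConnected {w | p w}) : IsRankFunction fun x : {x // p x} => ρ x :=
  fun x y hxy => hρ <| (Set.OrdConnected.apply_covBy_apply_iff (OrderEmbedding.subtype p)
    (by simpa using hp)).mpr hxy

theorem intervalEulerSum_subtype (ρ : α → ℤ) (hp : Set.OrdConnected {w | p w})
    (x y : {x // p x}) :
    intervalEulerSum (fun x : {x // p x} => ρ x) x y = intervalEulerSum ρ x y := by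
  rw [intervalEulerSum_eq_finsum_mem_Icc, ← Set.preimage_subtype_val_Icc,
    finsum_mem_preimage_subtype_val _ fun w => (-1 : ℚ) ^ ρ w,
    Set.inter_eq_left.mpr (hp.out x.2 y.2)]
  rfl

end Subtype

section BoundedSubtype

variable [PartialOrder α] {t b : α}

theorem IsTop.ordConnected_setOf_ne (ht : IsTop t) : Set.OrdConnected {w | w ≠ t} :=
  IsLowerSet.ordConnected fun x _ hwx hx hw => hx (le_antisymm (ht x) (hw ▸ hwx))

theorem IsBot.ordConnected_setOf_ne (hb : IsBot b) : Set.OrdConnected {w | w ≠ b} :=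
  IsUpperSet.ordConnected fun x _ hxw hx hw => hx (le_antisymm (hw ▸ hxw) (hb x))

theorem IsMax.coe_covBy_of_isTop {x : {w // w ≠ t}} (hx : IsMax x) (ht : IsTop t) :
    (x : α) ⋖ t :=
  ⟨(ht x).lt_of_ne x.2, fun c hxc hct => hxc.not_ge (hx (show x ≤ ⟨c, hct.ne⟩ from hxc.le))⟩

theorem IsMin.covBy_coe_of_isBot {y : {w // w ≠ b}} (hy : IsMin y) (hb : IsBot b) :
    b ⋖ (y : α) :=
  ⟨(hb y).lt_of_ne (Ne.symm y.2),
    fun c hbc hcy => hcy.not_ge (hy (show (⟨c, hbc.ne'⟩ : {w // w ≠ b}) ≤ y from hcy.le))⟩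

theorem JoinAdmissible.subtype_ne {q : α} (hq : JoinAdmissible q)
    (hb : IsBot b) (hqb : q ≠ b) : JoinAdmissible (⟨q, hqb⟩ : {w // w ≠ b}) := by
  intro y
  obtain ⟨j, hj⟩ := hq y
  have hjb : j ≠ b := fun h => hqb (le_antisymm (h ▸ hj.1.2) (hb q))
  exact ⟨⟨j, hjb⟩, hj.1, fun w hw => hj.2 hw⟩

variable [Finite α] {ρ : α → ℤ}

theorem IsTop.finsum_mem_Ici_subtype_ne (ht : IsTop t)
    (hE : ∀ z, z < t → intervalEulerSum ρ z t = 0) (x : {w // w ≠ t}) :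
    ∑ᶠ y ∈ Set.Ici x, (-1 : ℚ) ^ ρ y = -(-1) ^ ρ t := by
  have hIco : Set.Ici (x : α) ∩ {w | w ≠ t} = Set.Ico (x : α) t := by
    ext w; simp [lt_iff_le_and_ne, ht w]
  rw [← Set.preimage_subtype_val_Ici, finsum_mem_preimage_subtype_val _ fun w => (-1 : ℚ) ^ ρ w,
    hIco]
  exact finsum_mem_Ico_eq_neg (ht x) (hE x ((ht x).lt_of_ne x.2))

theorem IsBot.finsum_mem_Iic_subtype_ne (hb : IsBot b)
    (hE : ∀ z, b < z → intervalEulerSum ρ b z = 0) (y : {w // w ≠ b}) :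
    ∑ᶠ x ∈ Set.Iic y, (-1 : ℚ) ^ ρ x = -(-1) ^ ρ b := by
  have hIoc : Set.Iic (y : α) ∩ {w | w ≠ b} = Set.Ioc b (y : α) := by
    ext w; simp [lt_iff_le_and_ne, hb w, ne_comm, and_comm]
  rw [← Set.preimage_subtype_val_Iic, finsum_mem_preimage_subtype_val _ fun w => (-1 : ℚ) ^ ρ w,
    hIoc]
  exact finsum_mem_Ioc_eq_neg (hb y) (hE y ((hb y).lt_of_ne (Ne.symm y.2)))

end BoundedSubtype

/-- `A ⊕ B` already carries the disjoint-sum order, so the star product order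
`starPartialOrder A B` is put on a type synonym. -/
def StarProd (A B : Type*) : Type _ := A ⊕ B

namespace StarProd

variable {A B : Type*}

abbrev inl (a : A) : StarProd A B := Sum.inl a

abbrev inr (b : B) : StarProd A B := Sum.inr b

abbrev elim {γ : Type*} (f : A → γ) (g : B → γ) : StarProd A B → γ := Sum.elim f g

theorem forall_iff {P : StarProd A B → Prop} : (∀ x, P x) ↔ (∀ a, P (inl a)) ∧ ∀ b, P (inr b) :=
  Sum.forall

theorem inl_injective : Function.Injective (inl : A → StarProd A B) := Sum.inl_injective

theorem inr_injective : Function.Injective (inr : B → StarProd A B) := Sum.inr_injective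

@[simp] theorem inl_inj {a a' : A} : (inl a : StarProd A B) = inl a' ↔ a = a' :=
  inl_injective.eq_iff

@[simp] theorem inr_inj {b b' : B} : (inr b : StarProd A B) = inr b' ↔ b = b' :=
  inr_injective.eq_iff

theorem disjoint_image_inl_image_inr (s : Set A) (t : Set B) :
    Disjoint (inl '' s : Set (StarProd A B)) (inr '' t) :=
  Set.disjoint_image_inl_image_inr

variable [PartialOrder A] [PartialOrder B]

instance : PartialOrder (StarProd A B) := starPartialOrder A B

@[simp] theorem inl_le_inl_iff {a a' : A} : (inl a : StarProd A B) ≤ inl a' ↔ a ≤ a' :=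
  Iff.rfl

@[simp] theorem inr_le_inr_iff {b b' : B} : (inr b : StarProd A B) ≤ inr b' ↔ b ≤ b' :=
  Iff.rfl

@[simp] theorem inl_le_inr (a : A) (b : B) : (inl a : StarProd A B) ≤ inr b :=
  trivial

@[simp] theorem not_inr_le_inl (a : A) (b : B) : ¬(inr b : StarProd A B) ≤ inl a :=
  id

@[simp] theorem inl_lt_inl_iff {a a' : A} : (inl a : StarProd A B) < inl a' ↔ a < a' := by
  simp [lt_iff_le_not_ge]

@[simp] theorem inr_lt_inr_iff {b b' : B} : (inr b : StarProd A B) < inr b' ↔ b < b' := by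
  simp [lt_iff_le_not_ge]

@[simp] theorem inl_lt_inr (a : A) (b : B) : (inl a : StarProd A B) < inr b := by
  simp [lt_iff_le_not_ge]

theorem inl_covBy_inl_iff {a a' : A} : (inl a : StarProd A B) ⋖ inl a' ↔ a ⋖ a' := by
  refine ⟨fun h => ⟨inl_lt_inl_iff.mp h.1, fun c hac hca =>
    h.2 (c := inl c) (inl_lt_inl_iff.mpr hac) (inl_lt_inl_iff.mpr hca)⟩, fun h => ?_⟩
  refine ⟨inl_lt_inl_iff.mpr h.1, ?_⟩
  rintro (c | c) hac hca
  · exact h.2 (inl_lt_inl_iff.mp hac) (inl_lt_inl_iff.mp hca)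
  · exact not_inr_le_inl _ _ hca.le

theorem inr_covBy_inr_iff {b b' : B} : (inr b : StarProd A B) ⋖ inr b' ↔ b ⋖ b' := by
  refine ⟨fun h => ⟨inr_lt_inr_iff.mp h.1, fun c hbc hcb =>
    h.2 (c := inr c) (inr_lt_inr_iff.mpr hbc) (inr_lt_inr_iff.mpr hcb)⟩, fun h => ?_⟩
  refine ⟨inr_lt_inr_iff.mpr h.1, ?_⟩
  rintro (c | c) hbc hcb
  · exact not_inr_le_inl _ _ hbc.le
  · exact h.2 (inr_lt_inr_iff.mp hbc) (inr_lt_inr_iff.mp hcb)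

theorem inl_covBy_inr_iff {a : A} {b : B} :
    (inl a : StarProd A B) ⋖ inr b ↔ IsMax a ∧ IsMin b := by
  refine ⟨fun h => ⟨fun c hac => ?_, fun c hcb => ?_⟩, fun h => ⟨inl_lt_inr a b, ?_⟩⟩
  · by_contra hca
    exact h.2 (c := inl c) (inl_lt_inl_iff.mpr (hac.lt_of_not_ge hca)) (inl_lt_inr c b)
  · by_contra hbc
    exact h.2 (c := inr c) (inl_lt_inr a c) (inr_lt_inr_iff.mpr (hcb.lt_of_not_ge hbc))
  rintro (c | c) hac hcb
  · exact h.1.not_lt (inl_lt_inl_iff.mp hac)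
  · exact h.2.not_lt (inr_lt_inr_iff.mp hcb)

theorem isRankFunction_elim {ρA : A → ℤ} {ρB : B → ℤ} (hA : IsRankFunction ρA)
    (hB : IsRankFunction ρB) (hAB : ∀ a b, IsMax a → IsMin b → ρB b = ρA a + 1) :
    IsRankFunction (elim ρA ρB) := by
  rintro (a | b) (a' | b') h
  · exact hA (inl_covBy_inl_iff.mp h)
  · exact hAB a b' (inl_covBy_inr_iff.mp h).1 (inl_covBy_inr_iff.mp h).2
  · exact absurd h.le (not_inr_le_inl _ _)
  · exact hB (inr_covBy_inr_iff.mp h)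

theorem Icc_inl_inl (a a' : A) :
    Set.Icc (inl a : StarProd A B) (inl a') = inl '' Set.Icc a a' :=
  Set.ext (forall_iff.mpr ⟨fun c => by simp, fun c => by simp⟩)

theorem Icc_inr_inr (b b' : B) :
    Set.Icc (inr b : StarProd A B) (inr b') = inr '' Set.Icc b b' :=
  Set.ext (forall_iff.mpr ⟨fun c => by simp, fun c => by simp⟩)

theorem Icc_inl_inr (a : A) (b : B) :
    Set.Icc (inl a : StarProd A B) (inr b) = inl '' Set.Ici a ∪ inr '' Set.Iic b :=
  Set.ext (forall_iff.mpr ⟨fun c => by simp, fun c => by simp⟩)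

variable (ρA : A → ℤ) (ρB : B → ℤ)

theorem intervalEulerSum_inl_inl (a a' : A) :
    intervalEulerSum (elim ρA ρB) (inl a) (inl a') = intervalEulerSum ρA a a' := by
  rw [intervalEulerSum_eq_finsum_mem_Icc, Icc_inl_inl, finsum_mem_image inl_injective.injOn]
  rfl

theorem intervalEulerSum_inr_inr (b b' : B) :
    intervalEulerSum (elim ρA ρB) (inr b) (inr b') = intervalEulerSum ρB b b' := by
  rw [intervalEulerSum_eq_finsum_mem_Icc, Icc_inr_inr, finsum_mem_image inr_injective.injOn]
  rfl

theorem intervalEulerSum_inl_inr [Finite A] [Finite B] (a : A) (b : B) :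
    intervalEulerSum (elim ρA ρB) (inl a) (inr b) =
      ∑ᶠ x ∈ Set.Ici a, (-1 : ℚ) ^ ρA x + ∑ᶠ y ∈ Set.Iic b, (-1 : ℚ) ^ ρB y := by
  rw [intervalEulerSum_eq_finsum_mem_Icc, Icc_inl_inr,
    finsum_mem_union (disjoint_image_inl_image_inr _ _) (Set.toFinite _) (Set.toFinite _),
    finsum_mem_image inl_injective.injOn, finsum_mem_image inr_injective.injOn]
  rfl

variable {ρA ρB}

theorem lowerEulerian [Finite A] [Finite B] (hA : IsRankFunction ρA) (hB : IsRankFunction ρB)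
    (hAB : ∀ a b, IsMax a → IsMin b → ρB b = ρA a + 1) {a₀ : A} (ha₀ : IsBot a₀)
    (hEA : ∀ a a', a < a' → intervalEulerSum ρA a a' = 0)
    (hEB : ∀ b b', b < b' → intervalEulerSum ρB b b' = 0)
    (hEAB : ∀ a b, ∑ᶠ x ∈ Set.Ici a, (-1 : ℚ) ^ ρA x + ∑ᶠ y ∈ Set.Iic b, (-1 : ℚ) ^ ρB y = 0) :
    LowerEulerian (elim ρA ρB) := by
  refine ⟨isRankFunction_elim hA hB hAB, ⟨inl a₀, ?_⟩, ?_⟩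
  · rintro (a | b)
    exacts [ha₀ a, inl_le_inr a₀ b]
  rintro (a | b) (a' | b') h
  · rw [intervalEulerSum_inl_inl]
    exact hEA a a' (inl_lt_inl_iff.mp h)
  · rw [intervalEulerSum_inl_inr]
    exact hEAB a b'
  · exact absurd h.le (not_inr_le_inl _ _)
  · rw [intervalEulerSum_inr_inr]
    exact hEB b b' (inr_lt_inr_iff.mp h)

theorem joinAdmissible_inr {q : B} (hq : JoinAdmissible q) :
    JoinAdmissible (inr q : StarProd A B) := by
  rintro (a | b)
  · refine ⟨inr q, ⟨inl_le_inr a q, le_rfl⟩, ?_⟩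
    rintro (c | c) ⟨-, hc⟩
    exacts [absurd hc (not_inr_le_inl _ _), hc]
  · obtain ⟨j, hj⟩ := hq b
    refine ⟨inr j, hj.1, ?_⟩
    rintro (c | c) hc
    exacts [absurd hc.1 (not_inr_le_inl _ _), hj.2 hc]

end StarProd

/-- star products. Let `Γ` be a finite Eulerian poset of positive rank
with natural rank function `ρ` (so `ρ 0̂_Γ = 0`), and `Γ'` a finite lower Eulerian poset
with natural rank function `ρ'`. Then the star product
`Γ ∗ Γ' = ∂Γ ⊔ (Γ' ∖ {0̂_{Γ'}})` is lower Eulerian with rank function `ρ` on `∂Γ` and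
`ρ' + rank(Γ) - 1` on `Γ' ∖ {0̂_{Γ'}}`; and any join-admissible `q' ≠ 0̂_{Γ'}` of `Γ'`
remains join-admissible in `Γ ∗ Γ'`. -/
theorem star_lowerEulerian_and_joinAdmissible {Γ Γ' : Type*}
    [PartialOrder Γ] [PartialOrder Γ'] [Finite Γ] [Finite Γ']
    (ρ : Γ → ℤ) (ρ' : Γ' → ℤ)
    (b : Γ) (hb : ∀ z : Γ, b ≤ z) (t : Γ) (ht : ∀ z : Γ, z ≤ t)
    (hΓ : Eulerian ρ) (hrk : 0 < posetRank Γ) (hρb : ρ b = 0)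
    (b' : Γ') (hb' : ∀ z : Γ', b' ≤ z)
    (hΓ' : LowerEulerian ρ') (hρ'b : ρ' b' = 0)
    (q' : Γ') (hq' : q' ≠ b')
    (jn' : Γ' → Γ') (hjn' : ∀ z : Γ', IsLeast {w : Γ' | z ≤ w ∧ q' ≤ w} (jn' z)) :
    @LowerEulerian ({z : Γ // z ≠ t} ⊕ {z : Γ' // z ≠ b'})
      (starPartialOrder {z : Γ // z ≠ t} {z : Γ' // z ≠ b'})
      (Sum.elim (fun x => ρ x.1) (fun y => ρ' y.1 + (posetRank Γ : ℤ) - 1)) ∧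
    @JoinAdmissible ({z : Γ // z ≠ t} ⊕ {z : Γ' // z ≠ b'})
      (starPartialOrder {z : Γ // z ≠ t} {z : Γ' // z ≠ b'}).toPreorder
      (Sum.inr ⟨q', hq'⟩) := by
  obtain ⟨⟨hρ, -, hE⟩, -⟩ := hΓ
  obtain ⟨hρ', -, hE'⟩ := hΓ'
  have hr : (posetRank Γ : ℤ) = ρ t := by simpa [hρb] using hρ.posetRank_eq hb ht
  have hbt : b ≠ t := by rintro rfl; omega
  have hA := hρ.subtype (IsTop.ordConnected_setOf_ne ht)
  have hB := (hρ'.add_const (ρ t - 1)).subtype (IsBot.ordConnected_setOf_ne hb')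
  have hAB (x : {z // z ≠ t}) (y : {z // z ≠ b'}) (hx : IsMax x) (hy : IsMin y) :
      ρ' y + (ρ t - 1) = ρ x + 1 := by
    have := hρ (IsMax.coe_covBy_of_isTop hx ht)
    have := hρ' (IsMin.covBy_coe_of_isBot hy hb')
    omega
  have hEA (x x' : {z // z ≠ t}) (h : x < x') : intervalEulerSum (fun x => ρ x.1) x x' = 0 :=
    (intervalEulerSum_subtype ρ (IsTop.ordConnected_setOf_ne ht) x x').trans (hE _ _ h)
  have hEB (y y' : {z // z ≠ b'}) (h : y < y') :
      intervalEulerSum (fun y => ρ' y.1 + (ρ t - 1)) y y' = 0 := by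
    rw [intervalEulerSum_subtype (fun z => ρ' z + (ρ t - 1)) (IsBot.ordConnected_setOf_ne hb'),
      intervalEulerSum_add_const, hE' _ _ h, mul_zero]
  have hEAB (x : {z // z ≠ t}) (y : {z // z ≠ b'}) :
      ∑ᶠ x' ∈ Set.Ici x, (-1 : ℚ) ^ ρ x' + ∑ᶠ y' ∈ Set.Iic y, (-1 : ℚ) ^ (ρ' y' + (ρ t - 1)) =
        0 := by
    rw [IsTop.finsum_mem_Ici_subtype_ne ht (fun z hz => hE z t hz), finsum_mem_neg_one_zpow_add,
      IsBot.finsum_mem_Iic_subtype_ne hb' (fun z hz => hE' b' z hz), hρ'b,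
      zpow_sub_one₀ (by norm_num)]
    ring
  simp only [hr, add_sub_assoc]
  exact ⟨StarProd.lowerEulerian hA hB hAB (a₀ := ⟨b, hbt⟩) (fun x => hb x) hEA hEB hEAB,
    StarProd.joinAdmissible_inr (JoinAdmissible.subtype_ne (fun z => ⟨jn' z, hjn' z⟩) hb' hq')⟩

end SFSPaper
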